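/- arXiv:1609.06353 — 2 statements merged into one kernel-verified Lean document; each statement's English description precedes it below -/
import Mathlib

section
/- Let K ≥ 4 and let U1, …, U_{K−1}, X, Y1, …, Y_K be finitely-valued random variables forming the Markov chain U1 → U2 → ⋯ → U_{K−1} → X → Y_K → ⋯ → Y1; set U_K := X, a_1 = I(U1;Y1), a_j = I(U_j;Y_j|U_{j−1}) for 2 ≤ j ≤ K, and b_{j,l} = I(U_j;Y_{l−2}|U_{l−2}). Then for every 3 ≤ k ≤ K−1 and all nonnegative reals R1, …, R_{k+1}, R_{k+1,2}: (R1, …, R_{k+1}, R_{k+1,2}) ∈ 𝓡_{k+1} if and only if there exist nonnegative reals R_{k,2} and R_{k+1,1} with R_{k+1} = R_{k,2} + R_{k+1,1} such that (R1, …, R_k, R_{k,2}) ∈ 𝓡_k, R_{k+1,1} + R_{k+1,2} ≤ a_{k+1}, and ∑_{i=j}^{k+1} R_i + R_{k+1,2} ≤ (∑_{i=j−1}^{k+1} a_i) − b_{k+1,j} for all 3 ≤ j ≤ k+2. -/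
/-!
Eliminating `R_{k,2}` and `R_{k+1,1}` from the right-hand side by Fourier–Motzkin gives back
the inequalities of `𝓡_{k+1}`, except for three comparisons between the parameters:
`0 ≤ b_{k+1,k+2}`, `b_{k,l} ≤ b_{k+1,l}` and `b_{k,k+1} ≤ a_k`. These are information
inequalities: nonnegativity of conditional mutual information, and the data-processing
inequalities `I(U_k;Y_{l-2}|U_{l-2}) ≤ I(U_{k+1};Y_{l-2}|U_{l-2})` and
`I(U_k;Y_{k-1}|U_{k-1}) ≤ I(U_k;Y_k|U_{k-1})` along the Markov chain. Both follow from the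
chain rule for entropy once `I(A;C|B) = 0` is known for a Markov triple `A → B → C`.
-/

open scoped BigOperators Classical

noncomputable section

namespace BRSec

variable {Ω : Type*} [Fintype Ω]

def prb (p : Ω → ℝ) {α : Type*} (X : Ω → α) (a : α) : ℝ :=
  ∑ ω, if X ω = a then p ω else 0

def IsPMF (p : Ω → ℝ) : Prop :=
  (∀ ω, 0 ≤ p ω) ∧ ∑ ω, p ω = 1

def H (p : Ω → ℝ) {α : Type*} [Fintype α] (X : Ω → α) : ℝ :=
  ∑ a, Real.negMulLog (prb p X a)

def MI (p : Ω → ℝ) {α β : Type*} [Fintype α] [Fintype β] (X : Ω → α) (Y : Ω → β) : ℝ :=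
  H p X + H p Y - H p fun ω => (X ω, Y ω)

def CMI (p : Ω → ℝ) {α β γ : Type*} [Fintype α] [Fintype β] [Fintype γ]
    (X : Ω → α) (Y : Ω → β) (Z : Ω → γ) : ℝ :=
  (H p fun ω => (X ω, Z ω)) + (H p fun ω => (Y ω, Z ω))
    - (H p fun ω => (X ω, Y ω, Z ω)) - H p Z

def MarkovTriple (p : Ω → ℝ) {α β γ : Type*} (X : Ω → α) (Y : Ω → β) (Z : Ω → γ) : Prop :=
  ∀ a b c,
    prb p (fun ω => (X ω, Y ω, Z ω)) (a, b, c) * prb p Y b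
      = prb p (fun ω => (X ω, Y ω)) (a, b) * prb p (fun ω => (Y ω, Z ω)) (b, c)

section Params

variable {K : ℕ} {𝒰 : Fin (K - 1) → Type*} [∀ i, Fintype (𝒰 i)]
  {𝒳 : Type*} [Fintype 𝒳] {𝒴 : Fin K → Type*} [∀ k, Fintype (𝒴 k)]

/-- `a_1 = I(U_1;Y_1)` and `a_j = I(U_j;Y_j|U_{j-1})` for `2 ≤ j ≤ K`, with `U_K := X`;
indices are `1`-based (value `0` outside `1 ≤ j ≤ K`). -/
def aT (p : Ω → ℝ) (U : (i : Fin (K - 1)) → Ω → 𝒰 i) (X : Ω → 𝒳)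
    (Y : (k : Fin K) → Ω → 𝒴 k) (j : ℕ) : ℝ :=
  if h : 2 ≤ K ∧ 1 ≤ j ∧ j ≤ K then
    if h1 : j = 1 then MI p (U ⟨0, by omega⟩) (Y ⟨0, by omega⟩)
    else if hK : j = K then
      CMI p X (Y ⟨j - 1, by omega⟩) (U ⟨j - 2, by omega⟩)
    else CMI p (U ⟨j - 1, by omega⟩) (Y ⟨j - 1, by omega⟩) (U ⟨j - 2, by omega⟩)
  else 0

/-- `b_{j,l} = I(U_j; Y_{l-2} | U_{l-2})` for `3 ≤ l ≤ K + 1`, `l - 1 ≤ j ≤ K`, with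
`U_K := X`; indices are `1`-based (value `0` outside this range). -/
def bT (p : Ω → ℝ) (U : (i : Fin (K - 1)) → Ω → 𝒰 i) (X : Ω → 𝒳)
    (Y : (k : Fin K) → Ω → 𝒴 k) (j l : ℕ) : ℝ :=
  if h : 3 ≤ l ∧ l ≤ K + 1 ∧ l - 1 ≤ j ∧ j ≤ K then
    if hK : j = K then CMI p X (Y ⟨l - 3, by omega⟩) (U ⟨l - 3, by omega⟩)
    else CMI p (U ⟨j - 1, by omega⟩) (Y ⟨l - 3, by omega⟩) (U ⟨l - 3, by omega⟩)
  else 0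

end Params

/-- `1`-based access to a `Fin K`-indexed rate tuple. -/
def oneB {K : ℕ} (R : Fin K → ℝ) (j : ℕ) : ℝ :=
  if h : 1 ≤ j ∧ j ≤ K then R ⟨j - 1, by omega⟩ else 0


section Region

variable {K : ℕ} {𝒰 : Fin (K - 1) → Type*} [∀ i, Fintype (𝒰 i)]
  {𝒳 : Type*} [Fintype 𝒳] {𝒴 : Fin K → Type*} [∀ k, Fintype (𝒴 k)]

/-- The region `𝓡_k` appearing in the inductive Fourier–Motzkin elimination:
nonnegative tuples `(R_1,…,R_k, R_{k,2})` satisfying the stated bounds, with the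
parameters instantiated as `a_j = aT …  j` and `b_{j,l} = bT … j l`.
Rates are `1`-based (`R j` for `1 ≤ j ≤ k`). -/
def inRk (p : Ω → ℝ) (U : (i : Fin (K - 1)) → Ω → 𝒰 i) (X : Ω → 𝒳)
    (Y : (k : Fin K) → Ω → 𝒴 k) (k : ℕ) (R : ℕ → ℝ) (Rk2 : ℝ) : Prop :=
  (∀ j, 1 ≤ j → j ≤ k → 0 ≤ R j) ∧ 0 ≤ Rk2 ∧
  R 1 ≤ aT p U X Y 1 ∧
  (∀ j, 2 ≤ j → j ≤ k - 1 →
    ∑ i ∈ Finset.Icc 2 j, R i ≤ ∑ i ∈ Finset.Icc 2 j, aT p U X Y i) ∧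
  ((∑ i ∈ Finset.Icc 2 k, R i) + Rk2 ≤ ∑ i ∈ Finset.Icc 2 k, aT p U X Y i) ∧
  (∀ l j, 3 ≤ l → l ≤ j → j ≤ k - 1 →
    ∑ i ∈ Finset.Icc l j, R i ≤ (∑ i ∈ Finset.Icc (l - 1) j, aT p U X Y i)
      - bT p U X Y j l) ∧
  (∀ l, 3 ≤ l → l ≤ k + 1 →
    (∑ i ∈ Finset.Icc l k, R i) + Rk2 ≤ (∑ i ∈ Finset.Icc (l - 1) k, aT p U X Y i)
      - bT p U X Y k l)

end Region

lemma sub_mul_div_le_mul_log {f u v m : ℝ} (hf : 0 < f) (hu : 0 < u) (hv : 0 < v) (hm : 0 < m) :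
    f - u * v / m ≤ f * (Real.log f + Real.log m - Real.log u - Real.log v) := by
  have hlog := Real.log_le_sub_one_of_pos (show 0 < u * v / (f * m) by positivity)
  rw [Real.log_div (by positivity) (by positivity), Real.log_mul hu.ne' hv.ne',
    Real.log_mul hf.ne' hm.ne'] at hlog
  have hscale : f * (u * v / (f * m)) = u * v / m := by field_simp
  nlinarith [mul_le_mul_of_nonneg_left hlog hf.le]

section Distribution

variable {p : Ω → ℝ}

lemma prb_nonneg (hp0 : ∀ ω, 0 ≤ p ω) {α : Type*} (S : Ω → α) (s : α) : 0 ≤ prb p S s :=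
  Finset.sum_nonneg fun ω _ => by split_ifs <;> simp [hp0 ω]

lemma prb_congr {α β : Type*} {S : Ω → α} {T : Ω → β} {s : α} {t : β}
    (h : ∀ ω, S ω = s ↔ T ω = t) : prb p S s = prb p T t :=
  Finset.sum_congr rfl fun ω _ => if_congr (h ω) rfl rfl

lemma prb_le_prb (hp0 : ∀ ω, 0 ≤ p ω) {α β : Type*} {S : Ω → α} {T : Ω → β} {s : α} {t : β}
    (h : ∀ ω, S ω = s → T ω = t) : prb p S s ≤ prb p T t :=
  Finset.sum_le_sum fun ω _ => by split_ifs with hs ht <;> simp_all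

lemma sum_mul_comp_eq_sum_prb_mul {α : Type*} [Fintype α] (S : Ω → α) (g : α → ℝ) :
    ∑ ω, p ω * g (S ω) = ∑ a, prb p S a * g a := by
  simp only [prb, Finset.sum_mul, ite_mul, zero_mul]
  rw [Finset.sum_comm]
  simp

lemma sum_prb {α : Type*} [Fintype α] (S : Ω → α) : ∑ a, prb p S a = ∑ ω, p ω := by
  simpa using (sum_mul_comp_eq_sum_prb_mul S fun _ => (1 : ℝ)).symm

lemma sum_prb_pair_fst {α β : Type*} [Fintype α] (A : Ω → α) (B : Ω → β) (b : β) :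
    ∑ a, prb p (fun ω => (A ω, B ω)) (a, b) = prb p B b := by
  simp only [prb]
  rw [Finset.sum_comm]
  refine Finset.sum_congr rfl fun ω _ => ?_
  by_cases hb : B ω = b <;> simp [hb]

lemma prb_map_fst {α α' δ : Type*} [Fintype α] (f : α → α') (A : Ω → α) (D : Ω → δ)
    (a' : α') (d : δ) :
    prb p (fun ω => (f (A ω), D ω)) (a', d)
      = ∑ a with f a = a', prb p (fun ω => (A ω, D ω)) (a, d) := by
  simp only [prb]
  rw [Finset.sum_comm]
  refine Finset.sum_congr rfl fun ω _ => ?_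
  by_cases hD : D ω = d <;> simp [hD]

lemma H_eq_neg_sum_mul_log {α : Type*} [Fintype α] (S : Ω → α) :
    H p S = -∑ ω, p ω * Real.log (prb p S (S ω)) := by
  rw [sum_mul_comp_eq_sum_prb_mul S fun a => Real.log (prb p S a), H, ← Finset.sum_neg_distrib]
  simp [Real.negMulLog]

lemma H_congr {α β : Type*} [Fintype α] [Fintype β] {S : Ω → α} {T : Ω → β}
    (h : ∀ ω ω', S ω = S ω' ↔ T ω = T ω') : H p S = H p T := by
  simp only [H_eq_neg_sum_mul_log, prb_congr fun ω' => h ω' _]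

lemma prb_marginals_pos (hp0 : ∀ ω, 0 ≤ p ω) {α β γ : Type*}
    (X : Ω → α) (Y : Ω → β) (Z : Ω → γ) {x : α} {y : β} {z : γ}
    (h : 0 < prb p (fun ω => (X ω, Y ω, Z ω)) (x, y, z)) :
    0 < prb p (fun ω => (X ω, Z ω)) (x, z) ∧ 0 < prb p (fun ω => (Y ω, Z ω)) (y, z) ∧
      0 < prb p Z z := by
  refine ⟨h.trans_le (prb_le_prb hp0 ?_), h.trans_le (prb_le_prb hp0 ?_),
    h.trans_le (prb_le_prb hp0 ?_)⟩ <;> simp_all [Prod.ext_iff]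

end Distribution

section ConditionalMutualInformation

variable {p : Ω → ℝ} {α β γ : Type*} [Fintype α] [Fintype β] [Fintype γ]
  (X : Ω → α) (Y : Ω → β) (Z : Ω → γ)

lemma CMI_eq_sum_mul_log : CMI p X Y Z = ∑ t : α × β × γ,
    prb p (fun ω => (X ω, Y ω, Z ω)) t *
      (Real.log (prb p (fun ω => (X ω, Y ω, Z ω)) t) + Real.log (prb p Z t.2.2)
        - Real.log (prb p (fun ω => (X ω, Z ω)) (t.1, t.2.2))
        - Real.log (prb p (fun ω => (Y ω, Z ω)) (t.2.1, t.2.2))) := by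
  rw [← sum_mul_comp_eq_sum_prb_mul]
  simp only [CMI, H_eq_neg_sum_mul_log, ← Finset.sum_neg_distrib, ← Finset.sum_add_distrib,
    ← Finset.sum_sub_distrib]
  exact Finset.sum_congr rfl fun ω _ => by ring

lemma CMI_nonneg (hp0 : ∀ ω, 0 ≤ p ω) : 0 ≤ CMI p X Y Z := by
  set Q : α × β × γ → ℝ := fun t => prb p (fun ω => (X ω, Z ω)) (t.1, t.2.2)
    * prb p (fun ω => (Y ω, Z ω)) (t.2.1, t.2.2) / prb p Z t.2.2
  -- `x / 0 = 0` makes `a * a / a = a` for all `a`, so slices with `prb p Z z = 0` cause no trouble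
  have hQ : ∑ t, Q t = ∑ ω, p ω := by
    calc ∑ t, Q t
        = ∑ z : γ, (∑ x, prb p (fun ω => (X ω, Z ω)) (x, z))
            * (∑ y, prb p (fun ω => (Y ω, Z ω)) (y, z)) / prb p Z z := by
          simp only [Q, Finset.sum_mul_sum, Finset.sum_div, Fintype.sum_prod_type]
          conv_rhs => rw [Finset.sum_comm]
          exact Finset.sum_congr rfl fun x _ => Finset.sum_comm
      _ = ∑ ω, p ω := by simp only [sum_prb_pair_fst, mul_self_div_self, sum_prb]
  rw [CMI_eq_sum_mul_log]
  calc (0 : ℝ) = ∑ t, (prb p (fun ω => (X ω, Y ω, Z ω)) t - Q t) := by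
        rw [Finset.sum_sub_distrib, sum_prb, hQ, sub_self]
    _ ≤ _ := by
      refine Finset.sum_le_sum fun ⟨x, y, z⟩ _ => ?_
      rcases (prb_nonneg hp0 _ (x, y, z)).eq_or_lt with hF | hF
      · rw [← hF, zero_mul, zero_sub, neg_nonpos]
        exact div_nonneg (mul_nonneg (prb_nonneg hp0 _ _) (prb_nonneg hp0 _ _))
          (prb_nonneg hp0 _ _)
      obtain ⟨hxz, hyz, hz⟩ := prb_marginals_pos hp0 X Y Z hF
      exact sub_mul_div_le_mul_log hF hxz hyz hz

lemma CMI_eq_zero_of_condIndep (hp0 : ∀ ω, 0 ≤ p ω)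
    (h : ∀ x y z, prb p (fun ω => (X ω, Y ω, Z ω)) (x, y, z) * prb p Z z
      = prb p (fun ω => (X ω, Z ω)) (x, z) * prb p (fun ω => (Y ω, Z ω)) (y, z)) :
    CMI p X Y Z = 0 := by
  rw [CMI_eq_sum_mul_log]
  refine Finset.sum_eq_zero fun ⟨x, y, z⟩ _ => ?_
  rcases (prb_nonneg hp0 _ (x, y, z)).eq_or_lt with hF | hF
  · rw [← hF, zero_mul]
  obtain ⟨hxz, hyz, hz⟩ := prb_marginals_pos hp0 X Y Z hF
  have hlog := congrArg Real.log (h x y z)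
  rw [Real.log_mul hF.ne' hz.ne', Real.log_mul hxz.ne' hyz.ne'] at hlog
  rw [show Real.log (prb p (fun ω => (X ω, Y ω, Z ω)) (x, y, z)) + Real.log (prb p Z z)
    - Real.log (prb p (fun ω => (X ω, Z ω)) (x, z))
    - Real.log (prb p (fun ω => (Y ω, Z ω)) (y, z)) = 0 by linarith, mul_zero]

end ConditionalMutualInformation

section Markov

variable {p : Ω → ℝ} {α β γ δ : Type*}

lemma prb_swap (S : Ω → α) (T : Ω → β) (s : α) (t : β) :
    prb p (fun ω => (S ω, T ω)) (s, t) = prb p (fun ω => (T ω, S ω)) (t, s) :=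
  prb_congr fun ω => by simp only [Prod.mk.injEq]; tauto

lemma MarkovTriple.symm {A : Ω → α} {B : Ω → β} {C : Ω → γ} (h : MarkovTriple p A B C) :
    MarkovTriple p C B A := by
  intro c b a
  rw [prb_congr (T := fun ω => (A ω, B ω, C ω)) (t := (a, b, c)) fun ω => by
      simp only [Prod.mk.injEq]; tauto, prb_swap C B, prb_swap B A, h a b c, mul_comm]

lemma MarkovTriple.comp_left [Fintype α] {α' : Type*} {A : Ω → α} {B : Ω → β} {C : Ω → γ}
    (h : MarkovTriple p A B C) (f : α → α') : MarkovTriple p (fun ω => f (A ω)) B C := by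
  intro a' b c
  rw [prb_map_fst f A (fun ω => (B ω, C ω)), prb_map_fst f A B, Finset.sum_mul, Finset.sum_mul]
  exact Finset.sum_congr rfl fun a _ => h a b c

lemma MarkovTriple.comp [Fintype α] [Fintype γ] {α' γ' : Type*} {A : Ω → α} {B : Ω → β}
    {C : Ω → γ} (h : MarkovTriple p A B C) (f : α → α') (g : γ → γ') :
    MarkovTriple p (fun ω => f (A ω)) B (fun ω => g (C ω)) :=
  ((h.comp_left f).symm.comp_left g).symm

variable [Fintype α] [Fintype β] [Fintype γ] [Fintype δ]

lemma CMI_eq_zero_of_markov (hp0 : ∀ ω, 0 ≤ p ω) {A : Ω → α} {B : Ω → β} {C : Ω → γ}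
    (h : MarkovTriple p A B C) : CMI p A C B = 0 := by
  refine CMI_eq_zero_of_condIndep A C B hp0 fun a c b => ?_
  rw [prb_congr (T := fun ω => (A ω, B ω, C ω)) (t := (a, b, c)) fun ω => by
      simp only [Prod.mk.injEq]; tauto, prb_swap C B, h a b c]

variable {A : Ω → α} {B : Ω → β} {C : Ω → γ} {W : Ω → δ}

lemma CMI_eq_zero_of_markov_pair (hp0 : ∀ ω, 0 ≤ p ω)
    (h : MarkovTriple p (fun ω => (A ω, W ω)) B C) :
    CMI p A C (fun ω => (B ω, W ω)) = 0 := by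
  have hAWCB := CMI_eq_zero_of_markov hp0 h
  have hWCB := CMI_nonneg W C B hp0
  have e₁ : H p (fun ω => (A ω, B ω, W ω)) = H p (fun ω => ((A ω, W ω), B ω)) :=
    H_congr fun _ _ => by simp only [Prod.mk.injEq]; tauto
  have e₂ : H p (fun ω => (C ω, B ω, W ω)) = H p (fun ω => (W ω, C ω, B ω)) :=
    H_congr fun _ _ => by simp only [Prod.mk.injEq]; tauto
  have e₃ : H p (fun ω => (A ω, C ω, B ω, W ω)) = H p (fun ω => ((A ω, W ω), C ω, B ω)) :=
    H_congr fun _ _ => by simp only [Prod.mk.injEq]; tauto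
  have e₄ : H p (fun ω => (B ω, W ω)) = H p (fun ω => (W ω, B ω)) :=
    H_congr fun _ _ => by simp only [Prod.mk.injEq]; tauto
  -- chain rule: `I(A;C|B,W) = I(A,W;C|B) - I(W;C|B)`
  refine le_antisymm ?_ (CMI_nonneg _ _ _ hp0)
  simp only [CMI] at hAWCB hWCB ⊢
  linarith

lemma CMI_le_CMI_left_of_markov (hp0 : ∀ ω, 0 ≤ p ω)
    (h : MarkovTriple p (fun ω => (A ω, W ω)) B C) : CMI p A C W ≤ CMI p B C W := by
  have hACBW := CMI_eq_zero_of_markov_pair hp0 h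
  have hBCAW := CMI_nonneg B C (fun ω => (A ω, W ω)) hp0
  have e₁ : H p (fun ω => (B ω, A ω, W ω)) = H p (fun ω => (A ω, B ω, W ω)) :=
    H_congr fun _ _ => by simp only [Prod.mk.injEq]; tauto
  have e₂ : H p (fun ω => (C ω, A ω, W ω)) = H p (fun ω => (A ω, C ω, W ω)) :=
    H_congr fun _ _ => by simp only [Prod.mk.injEq]; tauto
  have e₃ : H p (fun ω => (B ω, C ω, A ω, W ω)) = H p (fun ω => (A ω, C ω, B ω, W ω)) :=
    H_congr fun _ _ => by simp only [Prod.mk.injEq]; tauto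
  have e₄ : H p (fun ω => (C ω, B ω, W ω)) = H p (fun ω => (B ω, C ω, W ω)) :=
    H_congr fun _ _ => by simp only [Prod.mk.injEq]; tauto
  -- chain rule: `I(B;C|W) - I(A;C|W) = I(B;C|A,W) - I(A;C|B,W)`
  simp only [CMI] at hACBW hBCAW ⊢
  linarith

lemma CMI_le_CMI_right_of_markov (hp0 : ∀ ω, 0 ≤ p ω)
    (h : MarkovTriple p (fun ω => (A ω, W ω)) B C) : CMI p A C W ≤ CMI p A B W := by
  have hACBW := CMI_eq_zero_of_markov_pair hp0 h
  have hABCW := CMI_nonneg A B (fun ω => (C ω, W ω)) hp0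
  have e₁ : H p (fun ω => (B ω, C ω, W ω)) = H p (fun ω => (C ω, B ω, W ω)) :=
    H_congr fun _ _ => by simp only [Prod.mk.injEq]; tauto
  have e₂ : H p (fun ω => (A ω, B ω, C ω, W ω)) = H p (fun ω => (A ω, C ω, B ω, W ω)) :=
    H_congr fun _ _ => by simp only [Prod.mk.injEq]; tauto
  -- chain rule: `I(A;B|W) - I(A;C|W) = I(A;B|C,W) - I(A;C|B,W)`
  simp only [CMI] at hACBW hABCW ⊢
  linarith

end Markov

section Elimination

variable {K : ℕ} {𝒰 : Fin (K - 1) → Type*} [∀ i, Fintype (𝒰 i)]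
  {𝒳 : Type*} [Fintype 𝒳] {𝒴 : Fin K → Type*} [∀ k, Fintype (𝒴 k)]
  {p : Ω → ℝ} {U : (i : Fin (K - 1)) → Ω → 𝒰 i} {X : Ω → 𝒳} {Y : (k : Fin K) → Ω → 𝒴 k}
  {k : ℕ} {R : ℕ → ℝ}

lemma aT_eq_of_lt {j : ℕ} (hj : 2 ≤ j) (hjK : j < K) :
    aT p U X Y j = CMI p (U ⟨j - 1, by omega⟩) (Y ⟨j - 1, by omega⟩) (U ⟨j - 2, by omega⟩) := by
  rw [aT, dif_pos (by omega), dif_neg (by omega), dif_neg (by omega)]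

lemma bT_eq_of_lt {j l : ℕ} (hl : 3 ≤ l) (hlj : l ≤ j + 1) (hjK : j < K) :
    bT p U X Y j l = CMI p (U ⟨j - 1, by omega⟩) (Y ⟨l - 3, by omega⟩) (U ⟨l - 3, by omega⟩) := by
  rw [bT, dif_pos (by omega), dif_neg (by omega)]

lemma bT_K_eq {l : ℕ} (hl : 3 ≤ l) (hlK : l ≤ K + 1) :
    bT p U X Y K l = CMI p X (Y ⟨l - 3, by omega⟩) (U ⟨l - 3, by omega⟩) := by
  rw [bT, dif_pos (by omega), dif_pos rfl]

lemma bT_nonneg (hp0 : ∀ ω, 0 ≤ p ω) (j l : ℕ) : 0 ≤ bT p U X Y j l := by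
  unfold bT
  split_ifs
  exacts [CMI_nonneg _ _ _ hp0, CMI_nonneg _ _ _ hp0, le_rfl]

lemma bT_le_bT_succ (hp0 : ∀ ω, 0 ≤ p ω)
    (hchainU : ∀ j : Fin (K - 1),
      MarkovTriple p (fun ω => fun i : {i : Fin (K - 1) // i < j} => U i.1 ω) (U j)
        (fun ω => ((fun i : {i : Fin (K - 1) // j < i} => U i.1 ω), X ω,
          fun k : Fin K => Y k ω)))
    (hchainX : MarkovTriple p (fun ω => fun i : Fin (K - 1) => U i ω) X
      (fun ω => fun k : Fin K => Y k ω))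
    {l : ℕ} (hl : 3 ≤ l) (hlk : l ≤ k + 1) (hkK : k + 1 ≤ K) :
    bT p U X Y k l ≤ bT p U X Y (k + 1) l := by
  rw [bT_eq_of_lt hl hlk (by omega)]
  rcases hkK.lt_or_eq with hkK | rfl
  · rw [bT_eq_of_lt hl (by omega) hkK]
    exact CMI_le_CMI_left_of_markov hp0 <| (hchainU ⟨k, by omega⟩).comp
      (fun u => (u ⟨⟨k - 1, by omega⟩, Fin.mk_lt_mk.mpr (by omega)⟩,
        u ⟨⟨l - 3, by omega⟩, Fin.mk_lt_mk.mpr (by omega)⟩))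
      (fun t => t.2.2 ⟨l - 3, by omega⟩)
  · rw [bT_K_eq hl (by omega)]
    exact CMI_le_CMI_left_of_markov hp0 <| hchainX.comp
      (fun u => (u ⟨k - 1, by omega⟩, u ⟨l - 3, by omega⟩)) (fun y => y ⟨l - 3, by omega⟩)

lemma bT_le_aT (hp0 : ∀ ω, 0 ≤ p ω)
    (hchainY : ∀ j : Fin K,
      MarkovTriple p
        (fun ω => ((fun i : Fin (K - 1) => U i ω), X ω,
          fun i : {i : Fin K // j < i} => Y i.1 ω))
        (Y j)
        (fun ω => fun i : {i : Fin K // i < j} => Y i.1 ω))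
    (hk : 2 ≤ k) (hkK : k < K) :
    bT p U X Y k (k + 1) ≤ aT p U X Y k := by
  rw [bT_eq_of_lt (by omega) le_rfl hkK, aT_eq_of_lt hk hkK]
  exact CMI_le_CMI_right_of_markov hp0 <| (hchainY ⟨k - 1, by omega⟩).comp
    (fun t => (t.1 ⟨k - 1, by omega⟩, t.1 ⟨k - 2, by omega⟩))
    (fun y => y ⟨⟨k - 2, by omega⟩, Fin.mk_lt_mk.mpr (by omega)⟩)


lemma inRk_of_inRk_succ {Rk12 x : ℝ} (h : inRk p U X Y (k + 1) R Rk12) (hx : 0 ≤ x)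
    (hsum : ∑ i ∈ Finset.Icc 2 k, R i + x ≤ ∑ i ∈ Finset.Icc 2 k, aT p U X Y i)
    (htail : ∀ l, 3 ≤ l → l ≤ k + 1 →
      ∑ i ∈ Finset.Icc l k, R i + x ≤ ∑ i ∈ Finset.Icc (l - 1) k, aT p U X Y i - bT p U X Y k l) :
    inRk p U X Y k R x := by
  obtain ⟨hR, -, h₁, hpre, -, hpair, -⟩ := h
  exact ⟨fun j hj hjk => hR j hj (by omega), hx, h₁, fun j hj hjk => hpre j hj (by omega), hsum,
    fun l j hl hlj hjk => hpair l j hl hlj (by omega), htail⟩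

lemma inRk_succ_of_inRk {Rk2 Rk11 Rk12 : ℝ} (hk : 1 ≤ k) (hRk12 : 0 ≤ Rk12) (hRk11 : 0 ≤ Rk11)
    (hsplit : R (k + 1) = Rk2 + Rk11) (h : inRk p U X Y k R Rk2)
    (hdec : Rk11 + Rk12 ≤ aT p U X Y (k + 1))
    (hsec : ∀ j, 3 ≤ j → j ≤ k + 2 →
      ∑ i ∈ Finset.Icc j (k + 1), R i + Rk12 ≤
        ∑ i ∈ Finset.Icc (j - 1) (k + 1), aT p U X Y i - bT p U X Y (k + 1) j) :
    inRk p U X Y (k + 1) R Rk12 := by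
  obtain ⟨hR, hRk2, h₁, hpre, hsum, hpair, htail⟩ := h
  refine ⟨fun j hj hjk => ?_, hRk12, h₁, fun j hj hjk => ?_, ?_, fun l j hl hlj hjk => ?_, hsec⟩
  · rcases hjk.lt_or_eq with hjk | rfl
    · exact hR j hj (by omega)
    · linarith
  · rcases hjk.lt_or_eq with hjk | rfl
    · exact hpre j hj (by omega)
    · linarith
  · rw [Finset.sum_Icc_succ_top (by omega) R, Finset.sum_Icc_succ_top (by omega)]
    linarith
  · rcases hjk.lt_or_eq with hjk | rfl
    · exact hpair l j hl hlj (by omega)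
    · have := htail l hl (by omega)
      linarith

lemma inRk_succ_iff {Rk12 : ℝ} (hk : 2 ≤ k) (hRk12 : 0 ≤ Rk12)
    (hb : 0 ≤ bT p U X Y (k + 1) (k + 2))
    (hmono : ∀ l, 3 ≤ l → l ≤ k + 1 → bT p U X Y k l ≤ bT p U X Y (k + 1) l)
    (hba : bT p U X Y k (k + 1) ≤ aT p U X Y k) :
    inRk p U X Y (k + 1) R Rk12 ↔
      ∃ Rk2 Rk11 : ℝ, 0 ≤ Rk2 ∧ 0 ≤ Rk11 ∧ R (k + 1) = Rk2 + Rk11 ∧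
        inRk p U X Y k R Rk2 ∧
        Rk11 + Rk12 ≤ aT p U X Y (k + 1) ∧
        (∀ j, 3 ≤ j → j ≤ k + 2 →
          (∑ i ∈ Finset.Icc j (k + 1), R i) + Rk12 ≤
            (∑ i ∈ Finset.Icc (j - 1) (k + 1), aT p U X Y i) - bT p U X Y (k + 1) j) := by
  refine ⟨fun h => ?_, fun ⟨Rk2, Rk11, _, hRk11, hsplit, hRk, hdec, hsec⟩ =>
    inRk_succ_of_inRk (by omega) hRk12 hRk11 hsplit hRk hdec hsec⟩
  have ⟨hR, _, _, hpre, hsum, hpair, htail⟩ := h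
  have hRk12_le : Rk12 ≤ aT p U X Y (k + 1) := by
    have := htail (k + 2) (by omega) le_rfl
    simp only [Finset.Icc_eq_empty_of_lt (Nat.lt_succ_self _), Finset.sum_empty,
      show k + 2 - 1 = k + 1 from rfl, Finset.Icc_self, Finset.sum_singleton] at this
    linarith
  rw [Finset.sum_Icc_succ_top (by omega) R, Finset.sum_Icc_succ_top (by omega)] at hsum
  have hRk := hR (k + 1) (by omega) le_rfl
  -- the least `R_{k,2}` compatible with the decoding constraint of receiver `k + 1`
  set x := max 0 (R (k + 1) + Rk12 - aT p U X Y (k + 1))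
  have hx : R (k + 1) + Rk12 - aT p U X Y (k + 1) ≤ x := le_max_right _ _
  refine ⟨x, R (k + 1) - x, le_max_left _ _, sub_nonneg.mpr (max_le hRk (by linarith)), by ring,
    inRk_of_inRk_succ h (le_max_left _ _) ?_ ?_, by linarith, htail⟩
  · have hpre_k := hpre k hk (by omega)
    exact le_sub_iff_add_le'.mp (max_le (by linarith) (by linarith))
  · intro l hl hlk
    have htail_l := htail l hl (by omega)
    rw [Finset.sum_Icc_succ_top (by omega) R, Finset.sum_Icc_succ_top (by omega)] at htail_l
    have hmono_l := hmono l hl hlk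
    refine le_sub_iff_add_le'.mp (max_le ?_ (by linarith))
    rcases hlk.lt_or_eq with hlk | rfl
    · linarith [hpair l k hl (by omega) (by omega)]
    · simp [hba]

end Elimination

theorem fourier_motzkin_step_general
    {K : ℕ}
    {Ωs : Type} [Fintype Ωs] (p : Ωs → ℝ) (hp : IsPMF p)
    {𝒰 : Fin (K - 1) → Type} [∀ i, Fintype (𝒰 i)]
    {𝒳 : Type} [Fintype 𝒳] {𝒴 : Fin K → Type} [∀ k, Fintype (𝒴 k)]
    (U : (i : Fin (K - 1)) → Ωs → 𝒰 i) (X : Ωs → 𝒳) (Y : (k : Fin K) → Ωs → 𝒴 k)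
    -- the Markov chain U₁ → ⋯ → U_{K-1} → X → Y_K → ⋯ → Y₁
    (hchainU : ∀ j : Fin (K - 1),
      MarkovTriple p (fun ω => fun i : {i : Fin (K - 1) // i < j} => U i.1 ω) (U j)
        (fun ω => ((fun i : {i : Fin (K - 1) // j < i} => U i.1 ω), X ω,
          fun k : Fin K => Y k ω)))
    (hchainX : MarkovTriple p (fun ω => fun i : Fin (K - 1) => U i ω) X
      (fun ω => fun k : Fin K => Y k ω))
    (hchainY : ∀ j : Fin K,
      MarkovTriple p
        (fun ω => ((fun i : Fin (K - 1) => U i ω), X ω,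
          fun i : {i : Fin K // j < i} => Y i.1 ω))
        (Y j)
        (fun ω => fun i : {i : Fin K // i < j} => Y i.1 ω))
    (k : ℕ) (hk3 : 3 ≤ k) (hkK : k ≤ K - 1)
    (R : ℕ → ℝ) (Rk12 : ℝ)
    (hRk12 : 0 ≤ Rk12) :
    inRk p U X Y (k + 1) R Rk12 ↔
      ∃ Rk2 Rk11 : ℝ, 0 ≤ Rk2 ∧ 0 ≤ Rk11 ∧ R (k + 1) = Rk2 + Rk11 ∧
        inRk p U X Y k R Rk2 ∧
        Rk11 + Rk12 ≤ aT p U X Y (k + 1) ∧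
        (∀ j, 3 ≤ j → j ≤ k + 2 →
          (∑ i ∈ Finset.Icc j (k + 1), R i) + Rk12 ≤
            (∑ i ∈ Finset.Icc (j - 1) (k + 1), aT p U X Y i) - bT p U X Y (k + 1) j) :=
  inRk_succ_iff (by omega) hRk12 (bT_nonneg hp.1 _ _)
    (fun _ hl hlk => bT_le_bT_succ hp.1 hchainU hchainX hl hlk (by omega))
    (bT_le_aT hp.1 hchainY (by omega) (by omega))

/-- Inductive step of the Fourier–Motzkin elimination in the
achievability proof: for `3 ≤ k ≤ K - 1`, membership of `(R_1,…,R_{k+1},R_{k+1,2})`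
in `𝓡_{k+1}` is equivalent to the existence of nonnegative `R_{k,2}, R_{k+1,1}` with
`R_{k+1} = R_{k,2} + R_{k+1,1}` such that `(R_1,…,R_k,R_{k,2}) ∈ 𝓡_k` together with
the decoding and secrecy constraints of receiver `k+1`. -/
theorem fourier_motzkin_step
    {K : ℕ} (hK : 4 ≤ K)
    {Ωs : Type} [Fintype Ωs] (p : Ωs → ℝ) (hp : IsPMF p)
    {𝒰 : Fin (K - 1) → Type} [∀ i, Fintype (𝒰 i)]
    {𝒳 : Type} [Fintype 𝒳] {𝒴 : Fin K → Type} [∀ k, Fintype (𝒴 k)]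
    (U : (i : Fin (K - 1)) → Ωs → 𝒰 i) (X : Ωs → 𝒳) (Y : (k : Fin K) → Ωs → 𝒴 k)
    -- the Markov chain U₁ → ⋯ → U_{K-1} → X → Y_K → ⋯ → Y₁
    (hchainU : ∀ j : Fin (K - 1),
      MarkovTriple p (fun ω => fun i : {i : Fin (K - 1) // i < j} => U i.1 ω) (U j)
        (fun ω => ((fun i : {i : Fin (K - 1) // j < i} => U i.1 ω), X ω,
          fun k : Fin K => Y k ω)))
    (hchainX : MarkovTriple p (fun ω => fun i : Fin (K - 1) => U i ω) X
      (fun ω => fun k : Fin K => Y k ω))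
    (hchainY : ∀ j : Fin K,
      MarkovTriple p
        (fun ω => ((fun i : Fin (K - 1) => U i ω), X ω,
          fun i : {i : Fin K // j < i} => Y i.1 ω))
        (Y j)
        (fun ω => fun i : {i : Fin K // i < j} => Y i.1 ω))
    (k : ℕ) (hk3 : 3 ≤ k) (hkK : k ≤ K - 1)
    (R : ℕ → ℝ) (Rk12 : ℝ)
    (hRnn : ∀ j, 1 ≤ j → j ≤ k + 1 → 0 ≤ R j) (hRk12 : 0 ≤ Rk12) :
    inRk p U X Y (k + 1) R Rk12 ↔
      ∃ Rk2 Rk11 : ℝ, 0 ≤ Rk2 ∧ 0 ≤ Rk11 ∧ R (k + 1) = Rk2 + Rk11 ∧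
        inRk p U X Y k R Rk2 ∧
        Rk11 + Rk12 ≤ aT p U X Y (k + 1) ∧
        (∀ j, 3 ≤ j → j ≤ k + 2 →
          (∑ i ∈ Finset.Icc j (k + 1), R i) + Rk12 ≤
            (∑ i ∈ Finset.Icc (j - 1) (k + 1), aT p U X Y i) - bT p U X Y (k + 1) j) :=
  fourier_motzkin_step_general p hp U X Y hchainU hchainX hchainY k hk3 hkK R Rk12 hRk12

end BRSec
end
end

section
/- Let W be a finitely-valued random variable jointly distributed with a finitely-valued sequence A^n = (A1, …, An), and let B^n and C^n be produced from A^n through a memoryless degraded cascade: there exist stochastic kernels q_B(b|a) and q_C(c|b) such that, conditioned on A^n, the pairs (B_i, C_i) for i = 1, …, n are mutually independent and independent of W, with Pr(B_i = b, C_i = c | A^n) = q_B(b | A_i) · q_C(c | b). Then ∑_{i=1}^{n} [ I(C_{i+1}^n; A_i | W, A^{i−1}) − I(A^{i−1}; A_i | W, B^{i−1}, C_{i+1}^n) − I(C_{i+1}^n; B_i | W, B^{i−1}) ] ≤ 0. -/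
/-!
By Csiszár's sum identity, `∑ᵢ I(C_{>i}; A_i | W, A_{<i}) = ∑ᵢ I(A_{<i}; C_i | W, C_{>i})`, and
likewise with `B` in place of `A`, so it suffices to show for each `i`, with `Z = (W, C_{>i})`,
`I(A_{<i}; C_i | Z) ≤ I(B_{<i}; C_i | Z) + I(A_{<i}; A_i | Z, B_{<i})`.
The chain rule gives `I(A_{<i}; C_i | Z) ≤ I(B_{<i}; C_i | Z) + I(A_{<i}; C_i | Z, B_{<i})`, and the
last term is at most `I(A_{<i}; A_i | Z, B_{<i})` by data processing: given `A`, the coordinates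
`(B_j, C_j)` are independent and `C_i` depends on `A_i` alone, so `C_i` is conditionally
independent of `(Z, B_{<i}, A_{<i})` given `A_i`.
-/

open scoped BigOperators Classical

noncomputable section

namespace BRSec

variable {Ω : Type*} [Fintype Ω]

section Distribution

variable {p : Ω → ℝ} {α β γ : Type*}

lemma prb_nonneg_s15 (hp : ∀ ω, 0 ≤ p ω) (X : Ω → α) (a : α) : 0 ≤ prb p X a :=
  Finset.sum_nonneg fun ω _ => by split_ifs <;> simp [hp ω]

lemma prb_comp [Fintype α] (X : Ω → α) (f : α → β) (b : β) :
    prb p (fun ω => f (X ω)) b = ∑ a, if f a = b then prb p X a else 0 := by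
  simp only [prb]
  rw [← Finset.sum_fiberwise (Finset.univ : Finset Ω) X]
  refine Finset.sum_congr rfl fun a _ => ?_
  rw [Finset.sum_filter]
  split_ifs with h
  · exact Finset.sum_congr rfl fun ω _ => by by_cases hω : X ω = a <;> simp [hω, h]
  · exact Finset.sum_eq_zero fun ω _ => by by_cases hω : X ω = a <;> simp [hω, h]

lemma prb_comp_of_injective (X : Ω → α) {f : α → β} (hf : f.Injective) (a : α) :
    prb p (fun ω => f (X ω)) (f a) = prb p X a := by
  simp only [prb, hf.eq_iff]

lemma prb_eq_sum_prb_pair [Fintype α] (X : Ω → α) (Y : Ω → β) (b : β) :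
    prb p Y b = ∑ a, prb p (fun ω => (X ω, Y ω)) (a, b) := by
  simp only [prb, Prod.mk.injEq]
  rw [Finset.sum_comm]
  refine Finset.sum_congr rfl fun ω _ => ?_
  by_cases h : Y ω = b <;> simp [h]

lemma prb_fst_thd_eq_sum [Fintype α] [Fintype β] [Fintype γ] (X : Ω → α) (Y : Ω → β)
    (Z : Ω → γ) (x : α) (z : γ) :
    prb p (fun ω => (X ω, Z ω)) (x, z) = ∑ y, prb p (fun ω => (X ω, Y ω, Z ω)) (x, y, z) := by
  rw [prb_comp (fun ω => (X ω, Y ω, Z ω)) (fun t => (t.1, t.2.2))]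
  simp [Fintype.sum_prod_type, ite_and, Finset.sum_ite_eq']

end Distribution

section Entropy

variable {p : Ω → ℝ} {α β γ : Type*} [Fintype α] [Fintype β] [Fintype γ]

lemma H_comp_of_injective (X : Ω → α) {f : α → β} (hf : f.Injective) :
    H p (fun ω => f (X ω)) = H p X := by
  refine (Fintype.sum_of_injective f hf _ _ (fun b hb => ?_) fun a => ?_).symm
  · rw [prb_comp, Finset.sum_eq_zero fun a _ => if_neg fun h => hb ⟨a, h⟩, Real.negMulLog_zero]
  · rw [prb_comp_of_injective X hf]

lemma H_eq_sum_of_comp (V : Ω → α) (f : α → β) (Y : Ω → β) (hY : ∀ ω, Y ω = f (V ω)) :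
    H p Y = -∑ v, prb p V v * Real.log (prb p Y (f v)) := by
  obtain rfl : Y = fun ω => f (V ω) := funext hY
  simp only [H, Real.negMulLog, prb_comp V f, neg_mul, Finset.sum_neg_distrib, ite_mul, zero_mul,
    Finset.sum_mul]
  rw [Finset.sum_comm]
  simp

end Entropy

section Weights

variable {α β : Type*} [Fintype α] [Fintype β]

-- Unnormalised, so that `CMI` splits over the value of the conditioning variable without
-- dividing by its probability.
def mutualInfoOfWeights (f : α → β → ℝ) : ℝ :=
  ∑ x, ∑ y, f x y * (Real.log (f x y) + Real.log (∑ x', ∑ y', f x' y')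
    - Real.log (∑ y', f x y') - Real.log (∑ x', f x' y))

lemma sub_le_mul_log_sub_log {q r : ℝ} (hq : 0 < q) (hr : 0 < r) :
    q - r ≤ q * (Real.log q - Real.log r) := by
  have h := Real.log_le_sub_one_of_pos (div_pos hr hq)
  rw [Real.log_div hr.ne' hq.ne'] at h
  have := mul_le_mul_of_nonneg_left h hq.le
  field_simp at this
  linarith

lemma marginals_pos_of_pos {f : α → β → ℝ} (hf : ∀ x y, 0 ≤ f x y) {x : α} {y : β}
    (hxy : 0 < f x y) : 0 < ∑ y', f x y' ∧ 0 < ∑ x', f x' y ∧ 0 < ∑ x', ∑ y', f x' y' := by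
  have hr : 0 < ∑ y', f x y' :=
    hxy.trans_le (Finset.single_le_sum (fun y _ => hf x y) (Finset.mem_univ y))
  refine ⟨hr, hxy.trans_le (Finset.single_le_sum (fun x _ => hf x y) (Finset.mem_univ x)),
    hr.trans_le ?_⟩
  exact Finset.single_le_sum (f := fun x => ∑ y', f x y')
    (fun x _ => Finset.sum_nonneg fun y _ => hf x y) (Finset.mem_univ x)

lemma mutualInfoOfWeights_nonneg {f : α → β → ℝ} (hf : ∀ x y, 0 ≤ f x y) :
    0 ≤ mutualInfoOfWeights f := by
  set row := fun x => ∑ y, f x y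
  set col := fun y => ∑ x, f x y
  set tot := ∑ x, ∑ y, f x y
  -- Gibbs' inequality against the product weights `row x * col y / tot`, whose total is `tot` too.
  have hpoint : ∀ x y, f x y - row x * col y / tot ≤ f x y * (Real.log (f x y) + Real.log tot
      - Real.log (row x) - Real.log (col y)) := by
    intro x y
    rcases (hf x y).eq_or_lt with h0 | hpos
    · rw [← h0, zero_mul, zero_sub, neg_nonpos]
      have hsum : ∀ x, 0 ≤ row x := fun x => Finset.sum_nonneg fun y _ => hf x y
      exact div_nonneg (mul_nonneg (hsum x) (Finset.sum_nonneg fun x _ => hf x y))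
        (Finset.sum_nonneg fun x _ => hsum x)
    obtain ⟨hr, hc, ht⟩ := marginals_pos_of_pos hf hpos
    convert sub_le_mul_log_sub_log hpos (div_pos (mul_pos hr hc) ht) using 2
    rw [Real.log_div (mul_pos hr hc).ne' ht.ne', Real.log_mul hr.ne' hc.ne']
    ring
  have hmass : ∑ x, ∑ y, row x * col y / tot = tot := by
    have hcol : ∑ y, col y = tot := Finset.sum_comm
    calc ∑ x, ∑ y, row x * col y / tot = (∑ x, row x) * (∑ y, col y) / tot := by
          rw [Fintype.sum_mul_sum, Finset.sum_div]; simp_rw [Finset.sum_div]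
      _ = tot := by rw [hcol]; exact mul_self_div_self tot
  calc 0 = tot - ∑ x, ∑ y, row x * col y / tot := by rw [hmass, sub_self]
    _ = ∑ x, ∑ y, (f x y - row x * col y / tot) := by simp only [Finset.sum_sub_distrib, tot]
    _ ≤ mutualInfoOfWeights f :=
      Finset.sum_le_sum fun x _ => Finset.sum_le_sum fun y _ => hpoint x y

lemma mutualInfoOfWeights_eq_zero {f : α → β → ℝ} (hf : ∀ x y, 0 ≤ f x y)
    (hprod : ∀ x y, f x y * ∑ x', ∑ y', f x' y' = (∑ y', f x y') * ∑ x', f x' y) :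
    mutualInfoOfWeights f = 0 := by
  refine Finset.sum_eq_zero fun x _ => Finset.sum_eq_zero fun y _ => ?_
  rcases (hf x y).eq_or_lt with h0 | hpos
  · rw [← h0, zero_mul]
  obtain ⟨hr, hc, ht⟩ := marginals_pos_of_pos hf hpos
  have hlog := congrArg Real.log (hprod x y)
  rw [Real.log_mul hpos.ne' ht.ne', Real.log_mul hr.ne' hc.ne'] at hlog
  rw [hlog]
  ring

end Weights

section CMI

variable {p : Ω → ℝ} {α β γ δ : Type*} [Fintype α] [Fintype β] [Fintype γ] [Fintype δ]

lemma cmi_eq_sum_mutualInfoOfWeights (X : Ω → α) (Y : Ω → β) (Z : Ω → γ) :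
    CMI p X Y Z
      = ∑ z, mutualInfoOfWeights fun x y => prb p (fun ω => (X ω, Y ω, Z ω)) (x, y, z) := by
  have hXZ := H_eq_sum_of_comp (p := p) (fun ω => (X ω, Y ω, Z ω))
    (fun t : α × β × γ => (t.1, t.2.2)) (fun ω => (X ω, Z ω)) fun _ => rfl
  have hYZ := H_eq_sum_of_comp (p := p) (fun ω => (X ω, Y ω, Z ω))
    (fun t : α × β × γ => t.2) (fun ω => (Y ω, Z ω)) fun _ => rfl
  have hXYZ := H_eq_sum_of_comp (p := p) (fun ω => (X ω, Y ω, Z ω))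
    id (fun ω => (X ω, Y ω, Z ω)) fun _ => rfl
  have hZ := H_eq_sum_of_comp (p := p) (fun ω => (X ω, Y ω, Z ω))
    (fun t : α × β × γ => t.2.2) Z fun _ => rfl
  simp only [prb_fst_thd_eq_sum X Y Z, prb_eq_sum_prb_pair X (fun ω => (Y ω, Z ω)),
    prb_eq_sum_prb_pair Y Z] at hXZ hYZ hZ
  rw [CMI, hXZ, hYZ, hXYZ, hZ]
  unfold mutualInfoOfWeights
  conv_rhs => rw [Finset.sum_comm]; arg 2; ext x; rw [Finset.sum_comm]
  simp only [Fintype.sum_prod_type, id, ← Finset.sum_neg_distrib,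
    ← Finset.sum_add_distrib, ← Finset.sum_sub_distrib]
  refine Finset.sum_congr rfl fun x _ => Finset.sum_congr rfl fun y _ =>
    Finset.sum_congr rfl fun z _ => ?_
  rw [Finset.sum_comm (s := Finset.univ (α := β))]
  ring

lemma cmi_nonneg (hp : ∀ ω, 0 ≤ p ω) (X : Ω → α) (Y : Ω → β) (Z : Ω → γ) : 0 ≤ CMI p X Y Z := by
  rw [cmi_eq_sum_mutualInfoOfWeights]
  exact Finset.sum_nonneg fun z _ => mutualInfoOfWeights_nonneg fun x y => prb_nonneg_s15 hp _ _

lemma cmi_eq_zero_of_factorization (hp : ∀ ω, 0 ≤ p ω) (X : Ω → α) (Y : Ω → β) (Z : Ω → γ)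
    (h : ∀ x y z, prb p (fun ω => (X ω, Y ω, Z ω)) (x, y, z) * prb p Z z
      = prb p (fun ω => (X ω, Z ω)) (x, z) * prb p (fun ω => (Y ω, Z ω)) (y, z)) :
    CMI p X Y Z = 0 := by
  have hZ : ∀ z, prb p Z z = ∑ x, ∑ y, prb p (fun ω => (X ω, Y ω, Z ω)) (x, y, z) := fun z => by
    rw [prb_eq_sum_prb_pair Y Z, Finset.sum_comm]
    simp_rw [prb_eq_sum_prb_pair X (fun ω => (Y ω, Z ω))]
  rw [cmi_eq_sum_mutualInfoOfWeights]
  refine Finset.sum_eq_zero fun z _ =>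
    mutualInfoOfWeights_eq_zero (fun x y => prb_nonneg_s15 hp _ _) fun x y => ?_
  rw [← hZ, h, prb_fst_thd_eq_sum X Y Z, prb_eq_sum_prb_pair X (fun ω => (Y ω, Z ω))]

lemma cmi_comp_injective {α' β' γ' : Type*} [Fintype α'] [Fintype β'] [Fintype γ']
    (X : Ω → α) (Y : Ω → β) (Z : Ω → γ) {f : α → α'} {g : β → β'} {h : γ → γ'}
    (hf : f.Injective) (hg : g.Injective) (hh : h.Injective) :
    CMI p (fun ω => f (X ω)) (fun ω => g (Y ω)) (fun ω => h (Z ω)) = CMI p X Y Z := by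
  have e1 : H p (fun ω => (f (X ω), h (Z ω))) = H p (fun ω => (X ω, Z ω)) :=
    H_comp_of_injective (fun ω => (X ω, Z ω)) (hf.prodMap hh)
  have e2 : H p (fun ω => (g (Y ω), h (Z ω))) = H p (fun ω => (Y ω, Z ω)) :=
    H_comp_of_injective (fun ω => (Y ω, Z ω)) (hg.prodMap hh)
  have e3 : H p (fun ω => (f (X ω), g (Y ω), h (Z ω))) = H p (fun ω => (X ω, Y ω, Z ω)) :=
    H_comp_of_injective (fun ω => (X ω, Y ω, Z ω)) (hf.prodMap (hg.prodMap hh))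
  simp only [CMI, e1, e2, e3, H_comp_of_injective Z hh]

lemma cmi_comm (X : Ω → α) (Y : Ω → β) (Z : Ω → γ) : CMI p X Y Z = CMI p Y X Z := by
  have e : H p (fun ω => (Y ω, X ω, Z ω)) = H p (fun ω => (X ω, Y ω, Z ω)) :=
    H_comp_of_injective (fun ω => (X ω, Y ω, Z ω))
      (f := fun t => (t.2.1, t.1, t.2.2)) (Function.LeftInverse.injective
        (g := fun t => (t.2.1, t.1, t.2.2)) fun _ => rfl)
  simp only [CMI, e]
  ring

lemma cmi_prod_mid (X : Ω → α) (Y : Ω → β) (Y' : Ω → δ) (Z : Ω → γ) :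
    CMI p X (fun ω => (Y ω, Y' ω)) Z = CMI p X Y Z + CMI p X Y' (fun ω => (Z ω, Y ω)) := by
  have e1 : H p (fun ω => (Y' ω, Z ω, Y ω)) = H p (fun ω => ((Y ω, Y' ω), Z ω)) :=
    H_comp_of_injective (fun ω => ((Y ω, Y' ω), Z ω))
      (f := fun t => (t.1.2, t.2, t.1.1)) (Function.LeftInverse.injective
        (g := fun t => ((t.2.2, t.1), t.2.1)) fun _ => rfl)
  have e2 : H p (fun ω => (X ω, Y' ω, Z ω, Y ω)) = H p (fun ω => (X ω, (Y ω, Y' ω), Z ω)) :=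
    H_comp_of_injective (fun ω => (X ω, (Y ω, Y' ω), Z ω))
      (f := fun t => (t.1, t.2.1.2, t.2.2, t.2.1.1)) (Function.LeftInverse.injective
        (g := fun t => (t.1, (t.2.2.2, t.2.1), t.2.2.1)) fun _ => rfl)
  have e3 : H p (fun ω => (X ω, Z ω, Y ω)) = H p (fun ω => (X ω, Y ω, Z ω)) :=
    H_comp_of_injective (fun ω => (X ω, Y ω, Z ω))
      (f := fun t => (t.1, t.2.2, t.2.1)) (Function.LeftInverse.injective
        (g := fun t => (t.1, t.2.2, t.2.1)) fun _ => rfl)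
  have e4 : H p (fun ω => (Z ω, Y ω)) = H p (fun ω => (Y ω, Z ω)) :=
    H_comp_of_injective (fun ω => (Y ω, Z ω)) Prod.swap_injective
  simp only [CMI, e1, e2, e3, e4]
  ring

lemma cmi_of_subsingleton_left [Subsingleton α] (X : Ω → α) (Y : Ω → β) (Z : Ω → γ) :
    CMI p X Y Z = 0 := by
  obtain hα | ⟨⟨x₀⟩⟩ := isEmpty_or_nonempty α
  · have := X.isEmpty
    simp [CMI, H, prb]
  have hX : X = fun _ => x₀ := funext fun _ => Subsingleton.elim _ _
  have e1 : H p (fun ω => (x₀, Z ω)) = H p Z := H_comp_of_injective Z (Prod.mk_right_injective x₀)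
  have e2 : H p (fun ω => (x₀, Y ω, Z ω)) = H p (fun ω => (Y ω, Z ω)) :=
    H_comp_of_injective (fun ω => (Y ω, Z ω)) (Prod.mk_right_injective x₀)
  simp only [CMI, hX, e1, e2]
  ring

end CMI

section Inequalities

variable {p : Ω → ℝ} {α β γ δ : Type*} [Fintype α] [Fintype β] [Fintype γ] [Fintype δ]

lemma cmi_prod_comm_mid (X : Ω → α) (Y : Ω → β) (Y' : Ω → δ) (Z : Ω → γ) :
    CMI p X (fun ω => (Y ω, Y' ω)) Z = CMI p X (fun ω => (Y' ω, Y ω)) Z :=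
  (cmi_comp_injective X (fun ω => (Y ω, Y' ω)) Z Function.injective_id Prod.swap_injective
    Function.injective_id).symm

lemma cmi_prod_comm_cond (X : Ω → α) (Y : Ω → β) (Z : Ω → γ) (Z' : Ω → δ) :
    CMI p X Y (fun ω => (Z ω, Z' ω)) = CMI p X Y (fun ω => (Z' ω, Z ω)) :=
  (cmi_comp_injective X Y (fun ω => (Z ω, Z' ω)) Function.injective_id Function.injective_id
    Prod.swap_injective).symm

variable {ε : Type*} [Fintype ε]

lemma cmi_le_cmi_add_cmi (hp : ∀ ω, 0 ≤ p ω) (X : Ω → α) (Y : Ω → β) (T : Ω → γ) (Z : Ω → δ) :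
    CMI p X T Z ≤ CMI p Y T Z + CMI p X T (fun ω => (Z ω, Y ω)) := by
  have hXY := cmi_prod_mid T X Y Z (p := p)
  have hYX := cmi_prod_mid T Y X Z (p := p)
  rw [cmi_comm X, cmi_comm Y, cmi_comm X]
  linarith [cmi_prod_comm_mid T X Y Z (p := p), cmi_nonneg hp T Y (fun ω => (Z ω, X ω))]

lemma cmi_eq_zero_of_prod_mid (hp : ∀ ω, 0 ≤ p ω) {T : Ω → α} {R : Ω → β} {X : Ω → γ}
    {S : Ω → δ} (h : CMI p T (fun ω => (R ω, X ω)) S = 0) :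
    CMI p T X (fun ω => (S ω, R ω)) = 0 := by
  rw [cmi_prod_mid] at h
  linarith [cmi_nonneg hp T R S, cmi_nonneg hp T X (fun ω => (S ω, R ω))]

lemma cmi_le_of_condIndep (hp : ∀ ω, 0 ≤ p ω) {X : Ω → α} {S : Ω → β} {T : Ω → γ} {Z : Ω → δ}
    (h : CMI p T X (fun ω => (S ω, Z ω)) = 0) : CMI p X T Z ≤ CMI p X S Z := by
  have hST := cmi_prod_mid X S T Z (p := p)
  have hTS := cmi_prod_mid X T S Z (p := p)
  rw [cmi_comm, cmi_prod_comm_cond] at h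
  linarith [cmi_prod_comm_mid X S T Z (p := p), cmi_nonneg hp X S (fun ω => (Z ω, T ω))]

lemma cmi_le_add_of_condIndep (hp : ∀ ω, 0 ≤ p ω) {X : Ω → α} {Y : Ω → β} {S : Ω → γ}
    {T : Ω → δ} {Z : Ω → ε} (h : CMI p T (fun ω => ((Z ω, Y ω), X ω)) S = 0) :
    CMI p X T Z ≤ CMI p Y T Z + CMI p X S (fun ω => (Z ω, Y ω)) := by
  linarith [cmi_le_cmi_add_cmi hp X Y T Z, cmi_le_of_condIndep hp (cmi_eq_zero_of_prod_mid hp h)]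

end Inequalities

section Csiszar

variable {α γ 𝒲 : Type*} {n : ℕ}

-- Indexed by `k : ℕ` so that the Csiszár identity telescopes over `k = 0, …, n`; for `i : Fin n`,
-- `restrictLT X i` and `restrictGE X (i + 1)` are definitionally the tuples `X^{i-1}`, `X_{i+1}^n`.
def restrictLT (X : Ω → Fin n → α) (k : ℕ) : Ω → {j : Fin n // j.1 < k} → α :=
  fun ω j => X ω j.1

def restrictGE (X : Ω → Fin n → α) (k : ℕ) : Ω → {j : Fin n // k ≤ j.1} → α :=
  fun ω j => X ω j.1

def peelLast (i : Fin n) (f : {j : Fin n // j.1 < i.1 + 1} → α) :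
    ({j : Fin n // j.1 < i.1} → α) × α :=
  (fun j => f ⟨j.1, Nat.lt_succ_of_lt j.2⟩, f ⟨i, Nat.lt_succ_self _⟩)

def peelFirst (i : Fin n) (f : {j : Fin n // i.1 ≤ j.1} → α) :
    α × ({j : Fin n // i.1 + 1 ≤ j.1} → α) :=
  (f ⟨i, le_rfl⟩, fun j => f ⟨j.1, Nat.le_of_succ_le j.2⟩)

lemma peelLast_injective (i : Fin n) : (peelLast (α := α) i).Injective := by
  intro f g hfg
  simp only [peelLast, Prod.mk.injEq] at hfg
  funext ⟨j, hj⟩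
  rcases Nat.lt_succ_iff_lt_or_eq.1 hj with hlt | heq
  · exact congrFun hfg.1 ⟨j, hlt⟩
  · obtain rfl : j = i := Fin.ext heq
    exact hfg.2

lemma peelFirst_injective (i : Fin n) : (peelFirst (α := α) i).Injective := by
  intro f g hfg
  simp only [peelFirst, Prod.mk.injEq] at hfg
  funext ⟨j, hj⟩
  rcases hj.lt_or_eq with hlt | heq
  · exact congrFun hfg.2 ⟨j, hlt⟩
  · obtain rfl : i = j := Fin.ext heq
    exact hfg.1

variable [Fintype α] [Fintype γ] [Fintype 𝒲] {p : Ω → ℝ}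

lemma csiszar_step (W : Ω → 𝒲) (S : Ω → Fin n → α) (T : Ω → Fin n → γ) (i : Fin n) :
    CMI p (restrictGE T (i + 1)) (fun ω => S ω i) (fun ω => (W ω, restrictLT S i ω))
      - CMI p (restrictLT S i) (fun ω => T ω i) (fun ω => (W ω, restrictGE T (i + 1) ω))
      = CMI p (restrictGE T (i + 1)) (restrictLT S (i + 1)) W
        - CMI p (restrictGE T i) (restrictLT S i) W := by
  have hS : CMI p (restrictGE T (i + 1)) (restrictLT S (i + 1)) W
      = CMI p (restrictGE T (i + 1)) (fun ω => (restrictLT S i ω, S ω i)) W :=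
    (cmi_comp_injective _ _ W Function.injective_id (peelLast_injective i)
      Function.injective_id).symm
  have hT : CMI p (restrictGE T i) (restrictLT S i) W
      = CMI p (fun ω => (T ω i, restrictGE T (i + 1) ω)) (restrictLT S i) W :=
    (cmi_comp_injective _ _ W (peelFirst_injective i) Function.injective_id
      Function.injective_id).symm
  rw [hS, hT, cmi_prod_mid, cmi_comm (fun ω => (T ω i, restrictGE T (i + 1) ω)),
    cmi_prod_comm_mid, cmi_prod_mid, cmi_comm (restrictLT S i) (restrictGE T (i + 1))]
  ring

lemma csiszar_sum_identity (W : Ω → 𝒲) (S : Ω → Fin n → α) (T : Ω → Fin n → γ) :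
    ∑ i : Fin n, CMI p (restrictGE T (i + 1)) (fun ω => S ω i) (fun ω => (W ω, restrictLT S i ω))
      = ∑ i : Fin n, CMI p (restrictLT S i) (fun ω => T ω i)
          (fun ω => (W ω, restrictGE T (i + 1) ω)) := by
  set ψ : ℕ → ℝ := fun k => CMI p (restrictGE T k) (restrictLT S k) W
  have hψn : ψ n = 0 := by
    have : IsEmpty {j : Fin n // n ≤ j.1} := ⟨fun j => Nat.not_lt.2 j.2 j.1.2⟩
    exact cmi_of_subsingleton_left _ _ _
  have hψ0 : ψ 0 = 0 := by
    have : IsEmpty {j : Fin n // j.1 < 0} := ⟨fun j => Nat.not_lt_zero _ j.2⟩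
    exact (cmi_comm _ _ _).trans (cmi_of_subsingleton_left _ _ _)
  rw [← sub_eq_zero, ← Finset.sum_sub_distrib]
  simp_rw [csiszar_step]
  rw [Fin.sum_univ_eq_sum_range (fun k => ψ (k + 1) - ψ k), Finset.sum_range_sub, hψn, hψ0,
    sub_zero]

end Csiszar

section CondKernel

variable {p : Ω → ℝ} {α β γ δ δ' : Type*}

def HasCondKernel (p : Ω → ℝ) (X : Ω → α) (U : Ω → δ) (κ : δ → α → ℝ) : Prop :=
  ∀ x u, prb p (fun ω => (X ω, U ω)) (x, u) = κ u x * prb p U u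

variable {X : Ω → α} {U : Ω → δ} {κ : δ → α → ℝ}

lemma HasCondKernel.of_factorization [Fintype α] (hκ : ∀ u, ∑ x, κ u x = 1) (Q : δ → ℝ)
    (h : ∀ x u, prb p (fun ω => (X ω, U ω)) (x, u) = κ u x * Q u) : HasCondKernel p X U κ := by
  intro x u
  have hU : prb p U u = Q u := by
    rw [prb_eq_sum_prb_pair X U]
    simp_rw [h, ← Finset.sum_mul, hκ, one_mul]
  rw [h, hU]

lemma HasCondKernel.comp_left [Fintype α] [Fintype δ] (h : HasCondKernel p X U κ) (f : α → β) :
    HasCondKernel p (fun ω => f (X ω)) U (fun u y => ∑ x, if f x = y then κ u x else 0) := by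
  unfold HasCondKernel at h
  intro y u
  refine (prb_comp (fun ω => (X ω, U ω)) (Prod.map f id) (y, u)).trans ?_
  simp [Fintype.sum_prod_type, ite_and, h, Finset.sum_mul]

lemma HasCondKernel.comp_right [Fintype α] [Fintype δ] (g : δ → δ') (κ' : δ' → α → ℝ)
    (h : HasCondKernel p X U fun u => κ' (g u)) : HasCondKernel p X (fun ω => g (U ω)) κ' := by
  unfold HasCondKernel at h
  intro x v
  refine (prb_comp (fun ω => (X ω, U ω)) (Prod.map id g) (x, v)).trans ?_
  rw [prb_comp U g v]
  simp only [Fintype.sum_prod_type, Prod.map, id, Prod.mk.injEq, ite_and, h, Finset.mul_sum,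
    Finset.sum_ite_irrel, Finset.sum_const_zero, Finset.sum_ite_eq', Finset.mem_univ, if_true,
    mul_ite, mul_zero]
  exact Finset.sum_congr rfl fun u _ => by split_ifs with hu <;> simp [hu]

lemma HasCondKernel.cmi_eq_zero [Fintype α] [Fintype β] [Fintype γ] (hp : ∀ ω, 0 ≤ p ω)
    {Y : Ω → β} {Z : Ω → γ} (κ : γ → α → ℝ)
    (h : HasCondKernel p X (fun ω => (Y ω, Z ω)) fun yz => κ yz.2) : CMI p X Y Z = 0 := by
  unfold HasCondKernel at h
  refine cmi_eq_zero_of_factorization hp X Y Z fun x y z => ?_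
  have hXZ : prb p (fun ω => (X ω, Z ω)) (x, z) = κ z x * prb p Z z := by
    rw [prb_fst_thd_eq_sum X Y Z, prb_eq_sum_prb_pair Y Z, Finset.mul_sum]
    exact Finset.sum_congr rfl fun y _ => h x (y, z)
  rw [h x (y, z), hXZ]
  ring

end CondKernel

section Cascade

variable {p : Ω → ℝ} {ι 𝒲 α β γ : Type*} [Fintype β] [Fintype γ]

def IsMemorylessCascade [Fintype ι] (p : Ω → ℝ) (W : Ω → 𝒲) (A : Ω → ι → α) (B : Ω → ι → β)
    (C : Ω → ι → γ) (qB : α → β → ℝ) (qC : β → γ → ℝ) : Prop :=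
  ∀ w a b c, prb p (fun ω => (W ω, A ω, B ω, C ω)) (w, a, b, c)
    = prb p (fun ω => (W ω, A ω)) (w, a) * ∏ i, (qB (a i) (b i) * qC (b i) (c i))

lemma IsMemorylessCascade.hasCondKernel_coord [Fintype ι] {W : Ω → 𝒲} {A : Ω → ι → α}
    {B : Ω → ι → β} {C : Ω → ι → γ} {qB : α → β → ℝ} {qC : β → γ → ℝ}
    (hjoint : IsMemorylessCascade p W A B C qB qC) (hqB1 : ∀ a, ∑ b, qB a b = 1)
    (hqC1 : ∀ b, ∑ c, qC b c = 1) (i : ι) :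
    HasCondKernel p (fun ω => (B ω i, C ω i))
      (fun ω => (W ω, A ω, fun j : {j // j ≠ i} => (B ω j, C ω j)))
      (fun u bc => qB (u.2.1 i) bc.1 * qC bc.1 bc.2) := by
  refine .of_factorization (fun u => ?_) (fun u => prb p (fun ω => (W ω, A ω)) (u.1, u.2.1) *
    ∏ j : {j // j ≠ i}, qB (u.2.1 j) (u.2.2 j).1 * qC (u.2.2 j).1 (u.2.2 j).2) ?_
  · simp_rw [Fintype.sum_prod_type, ← Finset.mul_sum, hqC1, mul_one, hqB1]
  -- `Φ` relabels `(W, A, B, C)` bijectively, so the joint law is read off `hjoint`.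
  rintro ⟨b₀, c₀⟩ ⟨w, a, r⟩
  let Φ : 𝒲 × (ι → α) × (ι → β) × (ι → γ) → (β × γ) × 𝒲 × (ι → α) × ({j // j ≠ i} → β × γ) :=
    fun v => ((v.2.2.1 i, v.2.2.2 i), v.1, v.2.1, fun j => (v.2.2.1 j, v.2.2.2 j))
  have hΦ : Φ.Injective := by
    rintro ⟨w, a, b, c⟩ ⟨w', a', b', c'⟩ h
    simp only [Φ, Prod.mk.injEq] at h
    obtain ⟨⟨hbi, hci⟩, rfl, rfl, hr⟩ := h
    have : ∀ j, b j = b' j ∧ c j = c' j := fun j => by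
      by_cases hj : j = i
      · exact hj ▸ ⟨hbi, hci⟩
      · simpa using congrFun hr ⟨j, hj⟩
    rw [funext fun j => (this j).1, funext fun j => (this j).2]
  let b : ι → β := fun j => if h : j = i then b₀ else (r ⟨j, h⟩).1
  let c : ι → γ := fun j => if h : j = i then c₀ else (r ⟨j, h⟩).2
  have hbc : Φ (w, a, b, c) = ((b₀, c₀), w, a, r) := by
    simp only [Φ, b, c, dif_pos, Prod.mk.injEq, true_and]
    funext j
    simp [j.2]
  have key := prb_comp_of_injective (p := p) (fun ω => (W ω, A ω, B ω, C ω)) hΦ (w, a, b, c)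
  rw [hbc, hjoint, Fintype.prod_eq_mul_prod_subtype_ne _ i] at key
  refine key.trans ?_
  have hb : ∀ j : {j // j ≠ i}, b j = (r j).1 := fun j => dif_neg j.2
  have hc : ∀ j : {j // j ≠ i}, c j = (r j).2 := fun j => dif_neg j.2
  simp only [hb, hc, b, c, dif_pos]
  ring

lemma IsMemorylessCascade.cmi_coord_eq_zero [Fintype 𝒲] [Fintype α] (hp : ∀ ω, 0 ≤ p ω)
    {n : ℕ} {W : Ω → 𝒲} {A : Ω → Fin n → α} {B : Ω → Fin n → β} {C : Ω → Fin n → γ}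
    {qB : α → β → ℝ} {qC : β → γ → ℝ} (hjoint : IsMemorylessCascade p W A B C qB qC)
    (hqB1 : ∀ a, ∑ b, qB a b = 1) (hqC1 : ∀ b, ∑ c, qC b c = 1) (i : Fin n) :
    CMI p (fun ω => C ω i)
      (fun ω => (((W ω, restrictGE C (i + 1) ω), restrictLT B i ω), restrictLT A i ω))
      (fun ω => A ω i) = 0 := by
  -- the kernel of `C i` is the composite channel `qB ; qC` at `A i`
  refine HasCondKernel.cmi_eq_zero hp
    (fun a c => ∑ bc : β × γ, if bc.2 = c then qB a bc.1 * qC bc.1 bc.2 else 0) ?_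
  refine HasCondKernel.comp_right (X := fun ω => C ω i)
    (U := fun ω => (W ω, A ω, fun j : {j // j ≠ i} => (B ω j, C ω j)))
    (fun u : 𝒲 × (Fin n → α) × ({j // j ≠ i} → β × γ) => ((((u.1,
      fun j : {j : Fin n // i.1 + 1 ≤ j.1} => (u.2.2 ⟨j.1, ne_of_gt (show i < j.1 from j.2)⟩).2),
      fun j : {j : Fin n // j.1 < i.1} => (u.2.2 ⟨j.1, ne_of_lt (show j.1 < i from j.2)⟩).1),
      fun j : {j : Fin n // j.1 < i.1} => u.2.1 j.1), u.2.1 i)) _ ?_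
  exact (hjoint.hasCondKernel_coord hqB1 hqC1 i).comp_left Prod.snd

end Cascade

lemma sum_cmi_sub_nonpos_of_condIndep {p : Ω → ℝ} {𝒲 α β γ : Type*} [Fintype 𝒲] [Fintype α]
    [Fintype β] [Fintype γ] (hp : ∀ ω, 0 ≤ p ω) {n : ℕ} (W : Ω → 𝒲) (A : Ω → Fin n → α)
    (B : Ω → Fin n → β) (C : Ω → Fin n → γ)
    (h : ∀ i : Fin n, CMI p (fun ω => C ω i)
      (fun ω => (((W ω, restrictGE C (i + 1) ω), restrictLT B i ω), restrictLT A i ω))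
      (fun ω => A ω i) = 0) :
    ∑ i : Fin n,
      (CMI p (restrictGE C (i + 1)) (fun ω => A ω i) (fun ω => (W ω, restrictLT A i ω))
        - CMI p (restrictLT A i) (fun ω => A ω i)
            (fun ω => (W ω, restrictLT B i ω, restrictGE C (i + 1) ω))
        - CMI p (restrictGE C (i + 1)) (fun ω => B ω i) (fun ω => (W ω, restrictLT B i ω)))
      ≤ 0 := by
  have key : ∀ i : Fin n,
      CMI p (restrictLT A i) (fun ω => C ω i) (fun ω => (W ω, restrictGE C (i + 1) ω))
        ≤ CMI p (restrictLT B i) (fun ω => C ω i) (fun ω => (W ω, restrictGE C (i + 1) ω))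
          + CMI p (restrictLT A i) (fun ω => A ω i)
              (fun ω => (W ω, restrictLT B i ω, restrictGE C (i + 1) ω)) := fun i => by
    have hperm := cmi_comp_injective (p := p) (restrictLT A i) (fun ω => A ω i)
      (fun ω => ((W ω, restrictGE C (i + 1) ω), restrictLT B i ω)) Function.injective_id
      Function.injective_id (h := fun t => (t.1.1, t.2, t.1.2))
      (Function.LeftInverse.injective (g := fun t => ((t.1, t.2.2), t.2.1)) fun _ => rfl)
    exact (cmi_le_add_of_condIndep hp (h i)).trans_eq (by rw [← hperm]; rfl)
  have hsum := Finset.sum_le_sum fun i (_ : i ∈ Finset.univ) => key i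
  rw [Finset.sum_add_distrib] at hsum
  rw [Finset.sum_sub_distrib, Finset.sum_sub_distrib, csiszar_sum_identity, csiszar_sum_identity]
  linarith

theorem degraded_cascade_second_fact_general
    (p : Ω → ℝ) (hp : IsPMF p) {n : ℕ}
    {𝒲 α β γ : Type*} [Fintype 𝒲] [Fintype α] [Fintype β] [Fintype γ]
    (W : Ω → 𝒲) (A : Ω → Fin n → α) (B : Ω → Fin n → β) (C : Ω → Fin n → γ)
    (qB : α → β → ℝ) (qC : β → γ → ℝ)
    (hqB1 : ∀ a, ∑ b, qB a b = 1)
    (hqC1 : ∀ b, ∑ c, qC b c = 1)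
    (hjoint : ∀ (w : 𝒲) (a : Fin n → α) (b : Fin n → β) (c : Fin n → γ),
      prb p (fun ω => (W ω, A ω, B ω, C ω)) (w, a, b, c)
        = prb p (fun ω => (W ω, A ω)) (w, a) * ∏ i, (qB (a i) (b i) * qC (b i) (c i))) :
    ∑ i : Fin n,
      (CMI p (fun ω => fun j : {j : Fin n // i < j} => C ω j.1)
          (fun ω => A ω i)
          (fun ω => (W ω, fun j : {j : Fin n // j < i} => A ω j.1))
       - CMI p (fun ω => fun j : {j : Fin n // j < i} => A ω j.1)
          (fun ω => A ω i)
          (fun ω => (W ω, (fun j : {j : Fin n // j < i} => B ω j.1),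
                     fun j : {j : Fin n // i < j} => C ω j.1))
       - CMI p (fun ω => fun j : {j : Fin n // i < j} => C ω j.1)
          (fun ω => B ω i)
          (fun ω => (W ω, fun j : {j : Fin n // j < i} => B ω j.1)))
    ≤ 0 :=
  sum_cmi_sub_nonpos_of_condIndep hp.1 W A B C
    (IsMemorylessCascade.cmi_coord_eq_zero hp.1 hjoint hqB1 hqC1)

/-- Second fact of the converse proof: under the same memoryless
degraded cascade as in Statement 14,
`∑_i [ I(C_{i+1}^n; A_i | W, A^{i−1}) − I(A^{i−1}; A_i | W, B^{i−1}, C_{i+1}^n)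
− I(C_{i+1}^n; B_i | W, B^{i−1}) ] ≤ 0`. -/
theorem degraded_cascade_second_fact
    (p : Ω → ℝ) (hp : IsPMF p) {n : ℕ}
    {𝒲 α β γ : Type*} [Fintype 𝒲] [Fintype α] [Fintype β] [Fintype γ]
    (W : Ω → 𝒲) (A : Ω → Fin n → α) (B : Ω → Fin n → β) (C : Ω → Fin n → γ)
    (qB : α → β → ℝ) (qC : β → γ → ℝ)
    (hqB0 : ∀ a b, 0 ≤ qB a b) (hqB1 : ∀ a, ∑ b, qB a b = 1)
    (hqC0 : ∀ b c, 0 ≤ qC b c) (hqC1 : ∀ b, ∑ c, qC b c = 1)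
    (hjoint : ∀ (w : 𝒲) (a : Fin n → α) (b : Fin n → β) (c : Fin n → γ),
      prb p (fun ω => (W ω, A ω, B ω, C ω)) (w, a, b, c)
        = prb p (fun ω => (W ω, A ω)) (w, a) * ∏ i, (qB (a i) (b i) * qC (b i) (c i))) :
    ∑ i : Fin n,
      (CMI p (fun ω => fun j : {j : Fin n // i < j} => C ω j.1)
          (fun ω => A ω i)
          (fun ω => (W ω, fun j : {j : Fin n // j < i} => A ω j.1))
       - CMI p (fun ω => fun j : {j : Fin n // j < i} => A ω j.1)
          (fun ω => A ω i)
          (fun ω => (W ω, (fun j : {j : Fin n // j < i} => B ω j.1),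
                     fun j : {j : Fin n // i < j} => C ω j.1))
       - CMI p (fun ω => fun j : {j : Fin n // i < j} => C ω j.1)
          (fun ω => B ω i)
          (fun ω => (W ω, fun j : {j : Fin n // j < i} => B ω j.1)))
    ≤ 0 :=
  degraded_cascade_second_fact_general p hp W A B C qB qC hqB1 hqC1 hjoint

end BRSec
end
end
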